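/- Let u_1, u_2 be complex numbers with 2Re(u_1) − Re(u_2) < 0 and Re(u_1) + Re(u_2) < 0. Then the integral ∫_{ℝ^2} (1 + x_2^2)^{(−1 − Re(u_1) + 2Re(u_2))/2} · (1 + x_2^2 + x_3^2)^{(−1 + 2Re(u_1) − Re(u_2))/2} dx_2 dx_3 is finite; consequently the integral X'_{w_4}(u, v, β, t) = ∫_{ℝ^2} e( −v_1 (β_1/(t_1 t_2)) x_1^* − t_1 x_2^* + t_2 x_2' ) (y_1^*)^{1−u_1} (y_2^*)^{1−u_2} dx_2' dx_3' converges absolutely, uniformly in the parameters t_1, t_2 > 0, β_1 > 0, v_1 ∈ {±1}. -/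

import Mathlib

open MeasureTheory

/-- e(x) = e^{2πix}. -/
noncomputable def e2pi (x : ℝ) : ℂ := Complex.exp (2 * Real.pi * Complex.I * x)

/-- `x₁*` as a function of `(x₂', x₃')`. -/
noncomputable def xw41 (x : ℝ × ℝ) : ℝ := x.2 / (1 + x.1 ^ 2 + x.2 ^ 2)

/-- `x₂*` as a function of `(x₂', x₃')`. -/
noncomputable def xw42 (x : ℝ × ℝ) : ℝ := -(x.1 * x.2) / (1 + x.1 ^ 2)

/-- `y₁*` as a function of `(x₂', x₃')`. -/
noncomputable def yw41 (x : ℝ × ℝ) : ℝ := Real.sqrt (1 + x.1 ^ 2) / (1 + x.1 ^ 2 + x.2 ^ 2)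

/-- `y₂*` as a function of `(x₂', x₃')`. -/
noncomputable def yw42 (x : ℝ × ℝ) : ℝ := Real.sqrt (1 + x.1 ^ 2 + x.2 ^ 2) / (1 + x.1 ^ 2)

/-- The integrand of `X'_{w₄}(u, v, β, t)`. -/
noncomputable def Xw4F (u₁ u₂ : ℂ) (v₁ β₁ t₁ t₂ : ℝ) (x : ℝ × ℝ) : ℂ :=
  e2pi (-(v₁ * (β₁ / (t₁ * t₂)) * xw41 x) - t₁ * xw42 x + t₂ * x.1) *
    ((yw41 x : ℝ) : ℂ) ^ ((1 : ℂ) - u₁) * ((yw42 x : ℝ) : ℂ) ^ ((1 : ℂ) - u₂)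

/-- The dominating function. -/
noncomputable def Xw4G (u₁ u₂ : ℂ) (x : ℝ × ℝ) : ℝ :=
  (1 + x.1 ^ 2) ^ ((-1 - u₁.re + 2 * u₂.re) / 2) *
    (1 + x.1 ^ 2 + x.2 ^ 2) ^ ((-1 + 2 * u₁.re - u₂.re) / 2)

/-!
`‖e(·)‖ = 1`, and with `A = 1 + x₂'²`, `B = A + x₃'²` one has `y₁* = √A / B`, `y₂* = √B / A`, so
`‖Xw4F‖` equals `A ^ p * B ^ q` with `p = (-1 - Re u₁ + 2 Re u₂)/2`, `q = (-1 + 2 Re u₁ - Re u₂)/2`;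
this is exactly `Xw4G`. The hypotheses say `q < -1/2` and `p + q < -1`. Pick `r` with
`max q (p + q + 1/2) < r < -1/2`; since `B ≥ A` and `B ≥ 1 + x₃'²`, splitting `B ^ q = B ^ (q - r) * B ^ r`
bounds `A ^ p * B ^ q` by `A ^ (p + q - r) * (1 + x₃'²) ^ r`, a product of two integrable functions of one
variable, as both exponents are `< -1/2`.
-/

lemma integrable_one_add_sq_rpow {r : ℝ} (hr : r < -(1 / 2)) :
    Integrable fun x : ℝ => (1 + x ^ 2) ^ r := by
  have h : Integrable fun x : ℝ => (1 + ‖x‖ ^ 2) ^ (-(-2 * r) / 2) :=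
    integrable_rpow_neg_one_add_norm_sq (by rw [Module.finrank_self, Nat.cast_one]; linarith)
  convert h using 2 with x
  rw [Real.norm_eq_abs, sq_abs]
  ring_nf

lemma one_add_sq_rpow_mul_le {p q r : ℝ} (hqr : q ≤ r) (hr : r ≤ 0) (s t : ℝ) :
    (1 + s ^ 2) ^ p * (1 + s ^ 2 + t ^ 2) ^ q ≤ (1 + s ^ 2) ^ (p + (q - r)) * (1 + t ^ 2) ^ r := by
  have hs : (0 : ℝ) < 1 + s ^ 2 := by positivity
  have ht : (0 : ℝ) < 1 + t ^ 2 := by positivity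
  have hB : (0 : ℝ) < 1 + s ^ 2 + t ^ 2 := by positivity
  have h₁ : (1 + s ^ 2 + t ^ 2) ^ (q - r) ≤ (1 + s ^ 2) ^ (q - r) :=
    Real.rpow_le_rpow_of_nonpos hs (by nlinarith) (by linarith)
  have h₂ : (1 + s ^ 2 + t ^ 2) ^ r ≤ (1 + t ^ 2) ^ r :=
    Real.rpow_le_rpow_of_nonpos ht (by nlinarith) hr
  calc (1 + s ^ 2) ^ p * (1 + s ^ 2 + t ^ 2) ^ q
      = (1 + s ^ 2) ^ p * ((1 + s ^ 2 + t ^ 2) ^ (q - r) * (1 + s ^ 2 + t ^ 2) ^ r) := by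
        rw [← Real.rpow_add hB, sub_add_cancel]
    _ ≤ (1 + s ^ 2) ^ p * ((1 + s ^ 2) ^ (q - r) * (1 + t ^ 2) ^ r) := by
        gcongr ?_ * ?_
        exact mul_le_mul h₁ h₂ (by positivity) (by positivity)
    _ = (1 + s ^ 2) ^ (p + (q - r)) * (1 + t ^ 2) ^ r := by
        rw [Real.rpow_add hs, mul_assoc]

lemma integrable_one_add_sq_rpow_mul_one_add_sq_add_sq_rpow {p q : ℝ} (hq : q < -(1 / 2))
    (hpq : p + q < -1) :
    Integrable fun x : ℝ × ℝ => (1 + x.1 ^ 2) ^ p * (1 + x.1 ^ 2 + x.2 ^ 2) ^ q := by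
  obtain ⟨r, hr_gt, hr_lt⟩ := exists_between (max_lt hq (by linarith : p + q + 1 / 2 < -(1 / 2)))
  have hqr : q ≤ r := (le_max_left _ _).trans hr_gt.le
  have hpqr : p + (q - r) < -(1 / 2) := by linarith [le_max_right q (p + q + 1 / 2)]
  have hprod : Integrable fun x : ℝ × ℝ => (1 + x.1 ^ 2) ^ (p + (q - r)) * (1 + x.2 ^ 2) ^ r := by
    rw [Measure.volume_eq_prod]
    exact (integrable_one_add_sq_rpow hpqr).mul_prod (integrable_one_add_sq_rpow hr_lt)
  refine hprod.mono' (by fun_prop) (ae_of_all _ fun x => ?_)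
  rw [Real.norm_of_nonneg (by positivity)]
  exact one_add_sq_rpow_mul_le hqr (by linarith) x.1 x.2

lemma sqrt_div_rpow_mul_sqrt_div_rpow {A B : ℝ} (hA : 0 < A) (hB : 0 < B) (a b : ℝ) :
    (Real.sqrt A / B) ^ a * (Real.sqrt B / A) ^ b = A ^ (a / 2 - b) * B ^ (b / 2 - a) := by
  rw [Real.sqrt_eq_rpow, Real.sqrt_eq_rpow,
    Real.div_rpow (by positivity) hB.le, Real.div_rpow (by positivity) hA.le,
    ← Real.rpow_mul hA.le, ← Real.rpow_mul hB.le, Real.rpow_sub hA, Real.rpow_sub hB]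
  ring_nf

lemma norm_e2pi (t : ℝ) : ‖e2pi t‖ = 1 := by
  rw [e2pi, Complex.norm_exp]
  norm_num [Complex.mul_re]

lemma norm_Xw4F (u₁ u₂ : ℂ) (v₁ β₁ t₁ t₂ : ℝ) (x : ℝ × ℝ) :
    ‖Xw4F u₁ u₂ v₁ β₁ t₁ t₂ x‖ = Xw4G u₁ u₂ x := by
  have hA : (0 : ℝ) < 1 + x.1 ^ 2 := by positivity
  have hB : (0 : ℝ) < 1 + x.1 ^ 2 + x.2 ^ 2 := by positivity
  rw [Xw4F, norm_mul, norm_mul, norm_e2pi, one_mul,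
    Complex.norm_cpow_eq_rpow_re_of_pos (by unfold yw41; positivity),
    Complex.norm_cpow_eq_rpow_re_of_pos (by unfold yw42; positivity), yw41, yw42,
    sqrt_div_rpow_mul_sqrt_div_rpow hA hB, Xw4G]
  congr 2 <;> simp only [Complex.sub_re, Complex.one_re] <;> ring

lemma measurable_Xw4F (u₁ u₂ : ℂ) (v₁ β₁ t₁ t₂ : ℝ) : Measurable (Xw4F u₁ u₂ v₁ β₁ t₁ t₂) := by
  unfold Xw4F e2pi xw41 xw42 yw41 yw42
  fun_prop

/-- Absolute convergence of `X'_{w₄}`, uniformly in the parameters, for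
`2 Re u₁ − Re u₂ < 0` and `Re u₁ + Re u₂ < 0`. -/
theorem statement17 (u₁ u₂ : ℂ) (h1 : 2 * u₁.re - u₂.re < 0) (h2 : u₁.re + u₂.re < 0) :
    Integrable (Xw4G u₁ u₂) ∧
      ∀ v₁ : ℝ, (v₁ = 1 ∨ v₁ = -1) →
        ∀ β₁ t₁ t₂ : ℝ, 0 < β₁ → 0 < t₁ → 0 < t₂ →
          Integrable (Xw4F u₁ u₂ v₁ β₁ t₁ t₂) ∧
            ∀ x : ℝ × ℝ, ‖Xw4F u₁ u₂ v₁ β₁ t₁ t₂ x‖ ≤ Xw4G u₁ u₂ x := by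
  have hG : Integrable (Xw4G u₁ u₂) :=
    integrable_one_add_sq_rpow_mul_one_add_sq_add_sq_rpow (by linarith) (by linarith)
  refine ⟨hG, fun v₁ _ β₁ t₁ t₂ _ _ _ => ⟨?_, fun x => (norm_Xw4F u₁ u₂ v₁ β₁ t₁ t₂ x).le⟩⟩
  exact hG.mono' (measurable_Xw4F u₁ u₂ v₁ β₁ t₁ t₂).aestronglyMeasurable
    (ae_of_all _ fun x => (norm_Xw4F u₁ u₂ v₁ β₁ t₁ t₂ x).le)
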